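/- Let R be a commutative ring with 1, n a positive integer, and a_{i,j}, b_{i,j} ∈ R for i,j = 1,…,n. Then for every k with 1 ≤ k ≤ n: Σ_{i=1}^{k} Σ_{j=1}^{n+1−k} Σ_{l=1}^{n} (−1)^{i+j+n+1} a_{i,l} b_{j,n+1−l} · det(A_î) · det(B_ĵ) = det((a_{r,s})_{1≤r,s≤k}) · det((b_{r,s})_{1≤r,s≤n+1−k}), where A_î is the (k−1)×(k−1) matrix obtained from the matrix (a_{r,s}) with rows r = 1,…,k and columns s = 1,…,k−1 by deleting row i, and B_ĵ is the (n−k)×(n−k) matrix obtained from the matrix (b_{r,s}) with rows r = 1,…,n+1−k and columns s = 1,…,n−k by deleting row j. For k = 1 the determinant det(A_î) is interpreted as 1, and for k = n the determinant det(B_ĵ) is interpreted as 1. -/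
import Mathlib

lemma sum_Icc_one {M : Type*} [AddCommMonoid M] (m : ℕ) (f : ℕ → M) :
    ∑ i ∈ Finset.Icc 1 m, f i = ∑ i : Fin m, f (i.val + 1) := by
  rw [← Finset.Ico_add_one_right_eq_Icc, Finset.sum_Ico_eq_sum_range, ← Fin.sum_univ_eq_sum_range]
  simp [Nat.add_comm]

/-- Laplace expansion along the last column, phrased with 1-indexed entries. -/
lemma col_expand {R : Type*} [CommRing R] (m : ℕ) (a : ℕ → ℕ → R) (c : ℕ) :
    ∑ i ∈ Finset.Icc 1 (m + 1), (-1 : R) ^ i * a i c *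
      (Matrix.of fun r s : Fin m =>
        a (if r.val + 1 < i then r.val + 1 else r.val + 2) (s.val + 1)).det
    = (-1 : R) ^ (m + 1) *
      (Matrix.of fun r s : Fin (m + 1) =>
        if s.val + 1 = m + 1 then a (r.val + 1) c else a (r.val + 1) (s.val + 1)).det := by
  rw [Matrix.det_succ_column _ (Fin.last m), Finset.mul_sum, sum_Icc_one]
  refine Finset.sum_congr rfl fun i _ => ?_
  have hsub : ∀ r s : Fin m,
      (Matrix.of fun r s : Fin (m + 1) =>
        if s.val + 1 = m + 1 then a (r.val + 1) c else a (r.val + 1) (s.val + 1)).submatrix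
        i.succAbove (Fin.last m).succAbove r s
      = a (if r.val + 1 < i.val + 1 then r.val + 1 else r.val + 2) (s.val + 1) := by
    intro r s
    rw [Fin.succAbove_last]
    simp only [Matrix.submatrix_apply, Matrix.of_apply, Fin.coe_castSucc]
    rw [if_neg (by omega)]
    by_cases h : (r : ℕ) < (i : ℕ)
    · rw [Fin.succAbove_of_castSucc_lt _ _ (by simpa [Fin.lt_iff_val_lt_val] using h)]
      simp only [Fin.coe_castSucc]
      rw [if_pos (by omega)]
    · rw [Fin.succAbove_of_le_castSucc _ _ (by simp [Fin.le_iff_val_le_val]; omega)]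
      simp only [Fin.val_succ]
      rw [if_neg (by omega)]
  have hentry : (Matrix.of fun r s : Fin (m + 1) =>
        if s.val + 1 = m + 1 then a (r.val + 1) c else a (r.val + 1) (s.val + 1)) i (Fin.last m)
      = a (i.val + 1) c := by
    simp [Matrix.of_apply]
  rw [hentry, show ((Matrix.of fun r s : Fin (m + 1) =>
        if s.val + 1 = m + 1 then a (r.val + 1) c else a (r.val + 1) (s.val + 1)).submatrix
        i.succAbove (Fin.last m).succAbove)
      = Matrix.of fun r s : Fin m =>
        a (if r.val + 1 < i.val + 1 then r.val + 1 else r.val + 2) (s.val + 1) from by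
      ext r s; exact hsub r s]
  have hl : ((Fin.last m : Fin (m+1)) : ℕ) = m := rfl
  rw [hl]
  have hsign : (-1:R)^(m+1) * (-1:R)^((i:ℕ)+m) = (-1:R)^((i:ℕ)+1) := by
    rw [← pow_add, show (m+1)+((i:ℕ)+m) = ((i:ℕ)+1) + 2*m from by omega, pow_add, pow_mul]
    norm_num
  rw [← mul_assoc, ← mul_assoc, hsign]

lemma col_zero {R : Type*} [CommRing R] (m c : ℕ) (hc1 : 1 ≤ c) (hc2 : c ≤ m) (a : ℕ → ℕ → R) :
    (Matrix.of fun r s : Fin (m + 1) =>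
      if s.val + 1 = m + 1 then a (r.val + 1) c else a (r.val + 1) (s.val + 1)).det = 0 := by
  apply Matrix.det_zero_of_column_eq (i := (⟨c - 1, by omega⟩ : Fin (m+1))) (j := Fin.last m)
  · simp [Fin.ext_iff, Fin.last]; omega
  · intro r
    simp only [Matrix.of_apply, Fin.last]
    rw [if_neg (by omega)]
    simp only [if_true]
    rw [show c - 1 + 1 = c from by omega]

lemma col_same {R : Type*} [CommRing R] (m : ℕ) (a : ℕ → ℕ → R) :
    (Matrix.of fun r s : Fin (m + 1) =>
      if s.val + 1 = m + 1 then a (r.val + 1) (m + 1) else a (r.val + 1) (s.val + 1)).det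
    = (Matrix.of fun r s : Fin (m + 1) => a (r.val + 1) (s.val + 1)).det := by
  congr 1
  ext r s
  simp only [Matrix.of_apply]
  split
  · next h => rw [h]
  · rfl

/-- The determinant identity of Lemma 2.2: entries are given (1-indexed) by
`a i j`, `b i j` for `1 ≤ i, j ≤ n`.  `A_î` is the `(k-1)×(k-1)` matrix obtained from
the matrix with rows `1,…,k` and columns `1,…,k-1` of `a` by deleting row `i`, and
`B_ĵ` is the `(n-k)×(n-k)` matrix obtained from the matrix with rows `1,…,n+1-k` and
columns `1,…,n-k` of `b` by deleting row `j`. -/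
theorem det_identity {R : Type*} [CommRing R] (n : ℕ) (hn : 1 ≤ n)
    (a b : ℕ → ℕ → R) (k : ℕ) (hk1 : 1 ≤ k) (hk2 : k ≤ n) :
    ∑ i ∈ Finset.Icc 1 k, ∑ j ∈ Finset.Icc 1 (n + 1 - k), ∑ l ∈ Finset.Icc 1 n,
      (-1 : R) ^ (i + j + n + 1) * a i l * b j (n + 1 - l) *
        (Matrix.of fun r s : Fin (k - 1) =>
          a (if r.val + 1 < i then r.val + 1 else r.val + 2) (s.val + 1)).det *
        (Matrix.of fun r s : Fin (n - k) =>
          b (if r.val + 1 < j then r.val + 1 else r.val + 2) (s.val + 1)).det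
    = (Matrix.of fun r s : Fin k => a (r.val + 1) (s.val + 1)).det *
      (Matrix.of fun r s : Fin (n + 1 - k) => b (r.val + 1) (s.val + 1)).det := by
  obtain ⟨m₁, rfl⟩ : ∃ m, k = m + 1 := ⟨k - 1, by omega⟩
  obtain ⟨m₂, hm2, hm2'⟩ : ∃ m, n + 1 - (m₁ + 1) = m + 1 ∧ n - (m₁ + 1) = m :=
    ⟨n - (m₁ + 1), by omega, rfl⟩
  rw [hm2, hm2', Nat.add_sub_cancel]
  calc
    ∑ i ∈ Finset.Icc 1 (m₁ + 1), ∑ j ∈ Finset.Icc 1 (m₂ + 1), ∑ l ∈ Finset.Icc 1 n,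
      (-1 : R) ^ (i + j + n + 1) * a i l * b j (n + 1 - l) *
        (Matrix.of fun r s : Fin m₁ =>
          a (if r.val + 1 < i then r.val + 1 else r.val + 2) (s.val + 1)).det *
        (Matrix.of fun r s : Fin m₂ =>
          b (if r.val + 1 < j then r.val + 1 else r.val + 2) (s.val + 1)).det
      = ∑ l ∈ Finset.Icc 1 n, ∑ i ∈ Finset.Icc 1 (m₁ + 1), ∑ j ∈ Finset.Icc 1 (m₂ + 1),
        (-1 : R) ^ (i + j + n + 1) * a i l * b j (n + 1 - l) *
          (Matrix.of fun r s : Fin m₁ =>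
            a (if r.val + 1 < i then r.val + 1 else r.val + 2) (s.val + 1)).det *
          (Matrix.of fun r s : Fin m₂ =>
            b (if r.val + 1 < j then r.val + 1 else r.val + 2) (s.val + 1)).det := by
        conv_rhs => rw [Finset.sum_comm]
        exact Finset.sum_congr rfl fun i _ => Finset.sum_comm
    _ = ∑ l ∈ Finset.Icc 1 n, (-1 : R) ^ (n + 1) *
          (∑ i ∈ Finset.Icc 1 (m₁ + 1), (-1 : R) ^ i * a i l *
            (Matrix.of fun r s : Fin m₁ =>
              a (if r.val + 1 < i then r.val + 1 else r.val + 2) (s.val + 1)).det) *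
          (∑ j ∈ Finset.Icc 1 (m₂ + 1), (-1 : R) ^ j * b j (n + 1 - l) *
            (Matrix.of fun r s : Fin m₂ =>
              b (if r.val + 1 < j then r.val + 1 else r.val + 2) (s.val + 1)).det) := by
        refine Finset.sum_congr rfl fun l _ => ?_
        rw [mul_assoc, Finset.sum_mul_sum, Finset.mul_sum]
        refine Finset.sum_congr rfl fun i _ => ?_
        rw [Finset.mul_sum]
        refine Finset.sum_congr rfl fun j _ => ?_
        rw [show i + j + n + 1 = i + (j + (n + 1)) from by ring, pow_add, pow_add]
        ring
    _ = ∑ l ∈ Finset.Icc 1 n,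
          (Matrix.of fun r s : Fin (m₁ + 1) =>
            if s.val + 1 = m₁ + 1 then a (r.val + 1) l else a (r.val + 1) (s.val + 1)).det *
          (Matrix.of fun r s : Fin (m₂ + 1) =>
            if s.val + 1 = m₂ + 1 then b (r.val + 1) (n + 1 - l)
            else b (r.val + 1) (s.val + 1)).det := by
        refine Finset.sum_congr rfl fun l _ => ?_
        rw [col_expand, col_expand]
        have key : ∀ x y : R, (-1:R)^(n+1) * ((-1:R)^(m₁+1) * x) * ((-1:R)^(m₂+1) * y)
            = x * y := by
          intro x y
          have h : (-1:R)^(n+1) * (-1:R)^(m₁+1) * (-1:R)^(m₂+1) = 1 := by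
            rw [← pow_add, ← pow_add,
              show (n+1) + (m₁+1) + (m₂+1) = 2 * (n + 1) from by omega, pow_mul]
            norm_num
          calc (-1:R)^(n+1) * ((-1:R)^(m₁+1) * x) * ((-1:R)^(m₂+1) * y)
              = ((-1:R)^(n+1) * (-1:R)^(m₁+1) * (-1:R)^(m₂+1)) * (x * y) := by ring
            _ = x * y := by rw [h, one_mul]
        exact key _ _
    _ = _ := by
        rw [Finset.sum_eq_single_of_mem (m₁ + 1) (by simp; omega)]
        · rw [hm2, col_same, col_same]
        · intro l hl hne
          simp only [Finset.mem_Icc] at hl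
          rcases Nat.lt_or_ge l (m₁ + 1) with h | h
          · rw [col_zero m₁ l (by omega) (by omega)]
            ring
          · rw [col_zero m₂ (n + 1 - l) (by omega) (by omega)]
            ring
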